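/- arXiv:math/0512149 — 4 statements merged into one kernel-verified Lean document; each statement's English description precedes it below -/
import Mathlib

section
/- The function u(x) = ln(√96/(√96 + |x|²)) on ℝ⁴ satisfies Δ²u = e^{4u}, where Δ = -∑∂ᵢᵢ is the geometer's Laplacian. -/
/-!
Both `u` and `Δu` are radial, `f(x) = g(‖x‖²)`, and for such functions on `ℝ⁴` one has
`Δf = -(8 g'(‖x‖²) + 4 ‖x‖² g''(‖x‖²))`. With `a = √96` and `t = ‖x‖²`, applying this to
`g(t) = log (a / (a + t))` gives `Δu = 4/(a+t) + 4a/(a+t)²`, and applying it again gives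
`Δ²u = 96 a² / (a+t)⁴`, which is `(a/(a+t))⁴ = e^{4u}` exactly because `a² = 96`.
-/

open MeasureTheory Metric Real Filter

noncomputable section

/-- The geometer's Laplacian `Δ = -∑ ∂ᵢᵢ` on `ℝ⁴`. -/
def lap (u : EuclideanSpace ℝ (Fin 4) → ℝ) (x : EuclideanSpace ℝ (Fin 4)) : ℝ :=
  -∑ i : Fin 4, iteratedFDeriv ℝ 2 u x ![EuclideanSpace.single i 1, EuclideanSpace.single i 1]

/-- The bi-Laplacian `Δ²`. -/
def biLap (u : EuclideanSpace ℝ (Fin 4) → ℝ) (x : EuclideanSpace ℝ (Fin 4)) : ℝ :=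
  lap (lap u) x

section Radial

variable {E : Type*} [NormedAddCommGroup E] [InnerProductSpace ℝ E] {g g₁ : ℝ → ℝ}

theorem hasFDerivAt_comp_norm_sq {d : ℝ} {x : E} (hg : HasDerivAt g d (‖x‖ ^ 2)) :
    HasFDerivAt (fun y : E => g (‖y‖ ^ 2)) ((2 * d) • innerSL ℝ x) x :=
  (hg.comp_hasFDerivAt x (hasStrictFDerivAt_norm_sq x).hasFDerivAt).congr_fderiv <| by
    ext w
    simp only [smul_apply, coe_innerSL_apply, nsmul_eq_mul, Nat.cast_ofNat, smul_eq_mul]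
    ring

theorem fderiv_fderiv_comp_norm_sq {d : ℝ} {x : E} (hg : ∀ t, 0 ≤ t → HasDerivAt g (g₁ t) t)
    (hg₁ : HasDerivAt g₁ d (‖x‖ ^ 2)) (v w : E) :
    fderiv ℝ (fderiv ℝ fun y : E => g (‖y‖ ^ 2)) x v w
      = 2 * g₁ (‖x‖ ^ 2) * inner ℝ v w + 4 * d * inner ℝ x v * inner ℝ x w := by
  have hfd : fderiv ℝ (fun y : E => g (‖y‖ ^ 2)) = fun y => (2 * g₁ (‖y‖ ^ 2)) • innerSL ℝ y :=
    funext fun y => (hasFDerivAt_comp_norm_sq (hg _ (sq_nonneg _))).fderiv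
  have h2 : HasFDerivAt (fun y => (2 * g₁ (‖y‖ ^ 2)) • innerSL ℝ y) _ x :=
    ((hasFDerivAt_comp_norm_sq hg₁).const_mul 2).smul
      (innerSL ℝ : E →L[ℝ] E →L[ℝ] ℝ).hasFDerivAt
  rw [hfd, h2.fderiv]
  simp only [add_apply, smul_apply, ContinuousLinearMap.smulRight_apply, coe_innerSL_apply,
    smul_eq_mul]
  -- `simp` cannot unfold `innerSL ℝ v w` through its coercion to a real-linear map
  rw [← innerSL_apply_apply ℝ v w]
  ring

end Radial

theorem lap_comp_norm_sq {g g₁ g₂ : ℝ → ℝ} (hg : ∀ t, 0 ≤ t → HasDerivAt g (g₁ t) t)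
    (hg₁ : ∀ t, 0 ≤ t → HasDerivAt g₁ (g₂ t) t) (x : EuclideanSpace ℝ (Fin 4)) :
    lap (fun y => g (‖y‖ ^ 2)) x = -(8 * g₁ (‖x‖ ^ 2) + 4 * ‖x‖ ^ 2 * g₂ (‖x‖ ^ 2)) := by
  simp only [lap, iteratedFDeriv_two_apply, Matrix.cons_val_zero, Matrix.cons_val_one,
    fderiv_fderiv_comp_norm_sq hg (hg₁ _ (sq_nonneg _))]
  simp only [EuclideanSpace.norm_sq_eq, norm_eq_abs, sq_abs, Fin.sum_univ_four,
    inner_self_eq_norm_sq_to_K, PiLp.norm_single, norm_one, ringHom_apply, one_pow, mul_one,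
    EuclideanSpace.inner_single_right, one_mul]
  ring

theorem hasDerivAt_inv_add_pow (a t : ℝ) (n : ℕ) (h : a + t ≠ 0) :
    HasDerivAt (fun s => ((a + s) ^ n)⁻¹) (-n * ((a + t) ^ (n + 1))⁻¹) t := by
  refine ((((hasDerivAt_id t).const_add a).pow n).inv (pow_ne_zero n h)).congr_deriv ?_
  rcases n with _ | n
  · simp
  · simp only [id_eq, Pi.pow_apply, Nat.add_sub_cancel, mul_one, Nat.cast_add, Nat.cast_one]
    field_simp
    ring

theorem lap_log_div {a : ℝ} (ha : 0 < a) (x : EuclideanSpace ℝ (Fin 4)) :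
    lap (fun y => log (a / (a + ‖y‖ ^ 2))) x
      = 4 * (a + ‖x‖ ^ 2)⁻¹ + 4 * a * ((a + ‖x‖ ^ 2) ^ 2)⁻¹ := by
  have hne : ∀ t : ℝ, 0 ≤ t → a + t ≠ 0 := fun t ht => by positivity
  have hg : ∀ t, 0 ≤ t → HasDerivAt (fun s => log (a / (a + s))) (-(a + t)⁻¹) t := by
    intro t ht
    refine (((hasDerivAt_const t a).div ((hasDerivAt_id t).const_add a) (hne t ht)).log
      (div_ne_zero ha.ne' (hne t ht))).congr_deriv ?_
    have := hne t ht
    simp only [id_eq, Pi.div_apply]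
    field_simp
    ring
  have hg₁ : ∀ t, 0 ≤ t → HasDerivAt (fun s => -(a + s)⁻¹) (((a + t) ^ 2)⁻¹) t := by
    intro t ht
    simpa using (hasDerivAt_inv_add_pow a t 1 (hne t ht)).fun_neg
  rw [lap_comp_norm_sq hg hg₁]
  have := hne _ (sq_nonneg ‖x‖)
  field_simp
  ring

theorem biLap_log_div {a : ℝ} (ha : 0 < a) (x : EuclideanSpace ℝ (Fin 4)) :
    biLap (fun y => log (a / (a + ‖y‖ ^ 2))) x = 96 * a ^ 2 / (a + ‖x‖ ^ 2) ^ 4 := by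
  have hne : ∀ t : ℝ, 0 ≤ t → a + t ≠ 0 := fun t ht => by positivity
  have hG : ∀ t, 0 ≤ t → HasDerivAt (fun s => 4 * (a + s)⁻¹ + 4 * a * ((a + s) ^ 2)⁻¹)
      (-4 * ((a + t) ^ 2)⁻¹ - 8 * a * ((a + t) ^ 3)⁻¹) t := by
    intro t ht
    have h1 : HasDerivAt (fun s => (a + s)⁻¹) (-((a + t) ^ 2)⁻¹) t := by
      simpa using hasDerivAt_inv_add_pow a t 1 (hne t ht)
    refine ((h1.const_mul 4).add
      ((hasDerivAt_inv_add_pow a t 2 (hne t ht)).const_mul (4 * a))).congr_deriv ?_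
    push_cast
    ring
  have hG₁ : ∀ t, 0 ≤ t → HasDerivAt (fun s => -4 * ((a + s) ^ 2)⁻¹ - 8 * a * ((a + s) ^ 3)⁻¹)
      (8 * ((a + t) ^ 3)⁻¹ + 24 * a * ((a + t) ^ 4)⁻¹) t := by
    intro t ht
    refine (((hasDerivAt_inv_add_pow a t 2 (hne t ht)).const_mul (-4)).sub
      ((hasDerivAt_inv_add_pow a t 3 (hne t ht)).const_mul (8 * a))).congr_deriv ?_
    push_cast
    ring
  rw [biLap, funext (lap_log_div ha), lap_comp_norm_sq hG hG₁]
  have := hne _ (sq_nonneg ‖x‖)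
  field_simp
  ring

theorem stmt0 (u : EuclideanSpace ℝ (Fin 4) → ℝ)
    (hu : ∀ x, u x = Real.log (Real.sqrt 96 / (Real.sqrt 96 + ‖x‖ ^ 2))) :
    ∀ x, biLap u x = Real.exp (4 * u x) := by
  intro x
  have hq : 0 < √96 / (√96 + ‖x‖ ^ 2) := by positivity
  have h96 : √96 ^ 4 = 96 * √96 ^ 2 := by
    rw [show √96 ^ 4 = (√96 ^ 2) ^ 2 by ring, sq_sqrt (by norm_num)]
    ring
  rw [funext hu, biLap_log_div (by positivity)]
  beta_reduce
  rw [← log_rpow hq, exp_log (rpow_pos_of_pos hq 4), rpow_ofNat, div_pow, h96]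
end
end

section
/- The integral over ℝ⁴ of e^{4u} dx, where u(x) = ln(√96/(√96 + |x|²)), equals 16π². -/
/-!
Since `exp (4 * u x) = (a / (a + ‖x‖ ^ 2)) ^ 4` with `a = √96`, the integrand is radial. Polar
coordinates (with `|S³| = 4 |B⁴| = 2π²`) reduce the integral to `2π² ∫₀^∞ r³ (a / (a + r²))⁴ dr`,
and the one-variable integral equals `a² / 12` by an explicit rational primitive. Hence the
integral is `π² a² / 6 = 16π²`.
-/

open MeasureTheory Metric Real Filter
open scoped RealInnerProductSpace

noncomputable section

open Set

lemma measureReal_ball_zero_one_fin_four :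
    volume.real (ball (0 : EuclideanSpace ℝ (Fin 4)) 1) = π ^ 2 / 2 := by
  rw [measureReal_def, InnerProductSpace.volume_ball_of_dim_even (k := 2) (by simp)]
  norm_num [ENNReal.toReal_ofReal, pi_nonneg]
  positivity

lemma integral_fun_norm_fin_four (f : ℝ → ℝ) :
    ∫ x : EuclideanSpace ℝ (Fin 4), f ‖x‖ = 2 * π ^ 2 * ∫ r in Ioi (0 : ℝ), r ^ 3 * f r := by
  rw [integral_fun_norm_addHaar volume f, finrank_euclideanSpace_fin,
    measureReal_ball_zero_one_fin_four]
  simp only [nsmul_eq_mul, smul_eq_mul]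
  ring

/-- Found by splitting `r ^ 3 = r * ((a + r ^ 2) - a)`. -/
def bubblePrimitive (a r : ℝ) : ℝ :=
  a ^ 4 * (a / (6 * (a + r ^ 2) ^ 3) - 1 / (4 * (a + r ^ 2) ^ 2))

lemma hasDerivAt_bubblePrimitive {a : ℝ} (ha : 0 < a) (r : ℝ) :
    HasDerivAt (bubblePrimitive a) (r ^ 3 * (a / (a + r ^ 2)) ^ 4) r := by
  have h : HasDerivAt (fun r : ℝ ↦ a + r ^ 2) (2 * r) r := by
    simpa using (hasDerivAt_pow 2 r).const_add a
  refine (((hasDerivAt_const r a).fun_div ((h.fun_pow 3).const_mul 6) (by positivity)).fun_sub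
    ((hasDerivAt_const r 1).fun_div ((h.fun_pow 2).const_mul 4) (by positivity))).const_mul (a ^ 4)
    |>.congr_deriv ?_
  field_simp
  ring

lemma tendsto_bubblePrimitive_atTop (a : ℝ) : Tendsto (bubblePrimitive a) atTop (nhds 0) := by
  have hs : Tendsto (fun r : ℝ ↦ a + r ^ 2) atTop atTop :=
    tendsto_atTop_add_const_left _ a (tendsto_pow_atTop two_ne_zero)
  have h3 := tendsto_const_nhds (x := a) |>.div_atTop
    (((tendsto_pow_atTop three_ne_zero).comp hs).const_mul_atTop (by norm_num : (0 : ℝ) < 6))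
  have h2 := tendsto_const_nhds (x := (1 : ℝ)) |>.div_atTop
    (((tendsto_pow_atTop two_ne_zero).comp hs).const_mul_atTop (by norm_num : (0 : ℝ) < 4))
  have h := (h3.sub h2).const_mul (a ^ 4)
  rwa [sub_zero, mul_zero] at h

lemma integral_Ioi_pow_three_mul_div_add_sq_pow_four {a : ℝ} (ha : 0 < a) :
    ∫ r in Ioi (0 : ℝ), r ^ 3 * (a / (a + r ^ 2)) ^ 4 = a ^ 2 / 12 := by
  rw [integral_Ioi_of_hasDerivAt_of_nonneg' (fun r _ ↦ hasDerivAt_bubblePrimitive ha r)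
    (fun r (hr : 0 < r) ↦ by positivity) (tendsto_bubblePrimitive_atTop a)]
  simp only [bubblePrimitive]
  field_simp
  ring

lemma integral_div_add_norm_sq_pow_four_fin_four {a : ℝ} (ha : 0 < a) :
    ∫ x : EuclideanSpace ℝ (Fin 4), (a / (a + ‖x‖ ^ 2)) ^ 4 = π ^ 2 * a ^ 2 / 6 := by
  rw [integral_fun_norm_fin_four (fun r ↦ (a / (a + r ^ 2)) ^ 4),
    integral_Ioi_pow_three_mul_div_add_sq_pow_four ha]
  ring

theorem stmt1 (u : EuclideanSpace ℝ (Fin 4) → ℝ)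
    (hu : ∀ x, u x = Real.log (Real.sqrt 96 / (Real.sqrt 96 + ‖x‖ ^ 2))) :
    ∫ x : EuclideanSpace ℝ (Fin 4), Real.exp (4 * u x) = 16 * Real.pi ^ 2 := by
  have h96 : (0 : ℝ) < √96 := by positivity
  have hexp : ∀ x, exp (4 * u x) = (√96 / (√96 + ‖x‖ ^ 2)) ^ 4 := fun x ↦ by
    rw [hu, ← Nat.cast_ofNat, ← log_pow, exp_log (by positivity)]
  simp_rw [hexp, integral_div_add_norm_sq_pow_four_fin_four h96,
    sq_sqrt (by norm_num : (0 : ℝ) ≤ 96)]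
  ring
end
end

section
/- Let φ ∈ C⁴(ℝ⁴) be radially symmetric, biharmonic (Δ²φ = 0 with Δ = -∑∂ᵢᵢ), satisfying φ(x) ≤ φ(0) = 0 for all x ∈ ℝ⁴ and φ ≢ 0. Then there exists α > 0 such that φ(x) = -α|x|² for all x ∈ ℝ⁴. -/
/-
Write `φ x = g ‖x‖`. For a radial function on `ℝ⁴` and `r = ‖x‖ > 0`,
`Δ (g ∘ ‖·‖) = -(g'' + 3 g' / r) = -r⁻³ (r³ g')'`. Hence if `Δ u = a` away from `0` with `u`
radial and `C²`, then `r³ g' - a r⁴ / 4` is constant on `[0, ∞)` and vanishes at `0`, so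
`g r = g 0 - a r² / 8`: smoothness at the origin rules out the `r⁻²` and `log r` solutions.
Applied to `Δ φ` (radial, with `Δ (Δ φ) = 0`) this makes `Δ φ` a constant `c`, and applied to
`φ` it gives `φ x = -(c / 8) ‖x‖²`; `φ ≤ 0` and `φ ≢ 0` force `c > 0`.
-/

open MeasureTheory Metric Real Filter
open scoped RealInnerProductSpace

noncomputable section

section RadialCalculus

variable {E : Type*} [NormedAddCommGroup E] [InnerProductSpace ℝ E]

theorem hasFDerivAt_norm_of_ne_zero {x : E} (hx : x ≠ 0) :
    HasFDerivAt (fun y : E => ‖y‖) (‖x‖⁻¹ • innerSL ℝ x) x := by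
  have h := (hasStrictFDerivAt_norm_sq x).hasFDerivAt.sqrt (pow_ne_zero 2 (norm_ne_zero_iff.2 hx))
  simp only [Real.sqrt_sq (norm_nonneg _)] at h
  convert h using 1
  ext v
  simp only [smul_apply, smul_eq_mul, nsmul_eq_mul, innerSL_apply_apply]
  field_simp
  norm_num

theorem hasFDerivAt_comp_norm {g : ℝ → ℝ} {x : E} (hx : x ≠ 0)
    (hg : DifferentiableAt ℝ g ‖x‖) :
    HasFDerivAt (fun y : E => g ‖y‖) ((deriv g ‖x‖ / ‖x‖) • innerSL ℝ x) x := by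
  have h := hg.hasDerivAt.comp_hasFDerivAt x (hasFDerivAt_norm_of_ne_zero hx)
  rwa [smul_smul, ← div_eq_mul_inv] at h

theorem iteratedFDeriv_two_comp_norm_apply {g : ℝ → ℝ} (hg : ContDiff ℝ 2 g) {x : E}
    (hx : x ≠ 0) (v : E) :
    iteratedFDeriv ℝ 2 (fun y : E => g ‖y‖) x ![v, v] =
      deriv g ‖x‖ / ‖x‖ * ‖v‖ ^ 2 +
        (deriv (deriv g) ‖x‖ - deriv g ‖x‖ / ‖x‖) * (⟪x, v⟫ / ‖x‖) ^ 2 := by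
  have hr : ‖x‖ ≠ 0 := norm_ne_zero_iff.2 hx
  have hgd : Differentiable ℝ g := hg.differentiable (by norm_num)
  have hg'd : Differentiable ℝ (deriv g) := hg.differentiable_deriv_two
  set q : ℝ → ℝ := fun r => deriv g r / r
  have hq : HasDerivAt q (deriv (deriv g) ‖x‖ * ‖x‖⁻¹ + deriv g ‖x‖ * -(‖x‖ ^ 2)⁻¹) ‖x‖ :=
    (hg'd ‖x‖).hasDerivAt.mul (hasDerivAt_inv hr)
  have hfd : fderiv ℝ (fun y : E => g ‖y‖) =ᶠ[nhds x] fun y => q ‖y‖ • innerSL ℝ y := by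
    filter_upwards [isOpen_compl_singleton.mem_nhds hx] with y hy
    exact (hasFDerivAt_comp_norm hy (hgd _)).fderiv
  have h2 := (((hq.comp_hasFDerivAt x (hasFDerivAt_norm_of_ne_zero hx)).smul
    (innerSL ℝ).hasFDerivAt).congr_of_eventuallyEq hfd).fderiv
  rw [iteratedFDeriv_two_apply]
  simp only [Matrix.cons_val_zero, Matrix.cons_val_one, h2]
  simp only [add_apply, smul_apply, ContinuousLinearMap.smulRight_apply, smul_eq_mul,
    Function.comp_apply, q]
  rw [innerSL_apply_apply, innerSL_apply_apply, real_inner_self_eq_norm_sq]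
  field_simp
  ring

theorem OrthonormalBasis.sum_iteratedFDeriv_two_comp_norm {ι : Type*} [Fintype ι]
    (b : OrthonormalBasis ι ℝ E) {g : ℝ → ℝ} (hg : ContDiff ℝ 2 g) {x : E} (hx : x ≠ 0) :
    ∑ i, iteratedFDeriv ℝ 2 (fun y : E => g ‖y‖) x ![b i, b i] =
      deriv (deriv g) ‖x‖ + (Fintype.card ι - 1) * deriv g ‖x‖ / ‖x‖ := by
  have hr : ‖x‖ ≠ 0 := norm_ne_zero_iff.2 hx
  simp only [iteratedFDeriv_two_comp_norm_apply hg hx, b.orthonormal.1, div_pow,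
    Finset.sum_add_distrib, ← Finset.mul_sum, ← Finset.sum_div, b.sum_sq_inner_left]
  simp only [one_pow, Finset.sum_const, Finset.card_univ, nsmul_eq_mul, mul_one]
  field_simp
  ring

end RadialCalculus

theorem lap_comp_norm {g : ℝ → ℝ} (hg : ContDiff ℝ 2 g) {x : EuclideanSpace ℝ (Fin 4)}
    (hx : x ≠ 0) :
    lap (fun y => g ‖y‖) x = -(deriv (deriv g) ‖x‖ + 3 * deriv g ‖x‖ / ‖x‖) := by
  have h := (EuclideanSpace.basisFun (Fin 4) ℝ).sum_iteratedFDeriv_two_comp_norm hg hx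
  simp only [EuclideanSpace.basisFun_apply, Fintype.card_fin] at h
  rw [lap, h]
  norm_num

theorem contDiff_lap {u : EuclideanSpace ℝ (Fin 4) → ℝ} {m n : WithTop ℕ∞}
    (hu : ContDiff ℝ m u) (hnm : n + 2 ≤ m) : ContDiff ℝ n (lap u) := by
  have h := hu.iteratedFDeriv_right (i := 2) hnm
  exact (ContDiff.sum fun i _ => (ContinuousMultilinearMap.apply ℝ _ ℝ
    ![EuclideanSpace.single i 1, EuclideanSpace.single i 1]).contDiff.comp h).neg

theorem exists_contDiff_eq_comp_norm {E : Type*} [NormedAddCommGroup E] [NormedSpace ℝ E]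
    [Nontrivial E] {n : WithTop ℕ∞} {u : E → ℝ} (hu : ContDiff ℝ n u)
    (hrad : ∀ x y, ‖x‖ = ‖y‖ → u x = u y) :
    ∃ g : ℝ → ℝ, ContDiff ℝ n g ∧ u = fun x => g ‖x‖ := by
  obtain ⟨e, he⟩ := exists_norm_eq E zero_le_one
  refine ⟨fun t => u (t • e), hu.comp (contDiff_id.smul contDiff_const), funext fun x => ?_⟩
  apply hrad
  rw [norm_smul, he, mul_one, norm_norm]

theorem eq_of_hasDerivAt_eq_zero_of_pos {F : ℝ → ℝ} (hF : ContinuousOn F (Set.Ici 0))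
    (hF' : ∀ t > 0, HasDerivAt F 0 t) {t : ℝ} (ht : 0 ≤ t) : F t = F 0 := by
  rcases ht.eq_or_lt with rfl | ht
  · rfl
  obtain ⟨c, hc, hslope⟩ := exists_hasDerivAt_eq_slope F (fun _ => 0) ht
    (hF.mono Set.Icc_subset_Ici_self) fun c hc => hF' c hc.1
  rw [eq_comm, div_eq_zero_iff, sub_eq_zero, sub_eq_zero] at hslope
  exact hslope.resolve_right ht.ne'

/- In divergence form the ODE reads `(t ^ m * h t)' = a * t ^ m`; for `m ≠ 0` the weight
`t ^ m` kills the integration constant at `t = 0`. -/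
theorem eq_mul_of_hasDerivAt_radial {h : ℝ → ℝ} (hh : Continuous h) {m : ℕ} (hm : m ≠ 0)
    {a : ℝ} (hode : ∀ t > 0, HasDerivAt h (a - m * h t / t) t) {t : ℝ} (ht : 0 < t) :
    h t = a / (m + 1) * t := by
  set F : ℝ → ℝ := fun s => s ^ m * h s - a / (m + 1) * s ^ (m + 1)
  have hF' : ∀ s > 0, HasDerivAt F 0 s := by
    intro s hs
    refine (((hasDerivAt_pow m s).mul (hode s hs)).sub ((hasDerivAt_pow (m + 1) s).const_mul
      (a / (m + 1)))).congr_deriv ?_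
    push_cast
    field_simp
    linear_combination (m * h s) * pow_sub_one_mul hm s
  have hF0 := eq_of_hasDerivAt_eq_zero_of_pos (by fun_prop) hF' ht.le
  simp only [F, zero_pow hm, zero_pow (Nat.succ_ne_zero m), zero_mul, mul_zero, sub_zero] at hF0
  have hcancel : t ^ m * (h t * (m + 1)) = t ^ m * (a * t) := by
    rw [pow_succ] at hF0
    field_simp at hF0
    linear_combination hF0
  field_simp
  exact mul_left_cancel₀ (pow_ne_zero m ht.ne') hcancel

theorem eq_add_mul_sq_of_radial_ode {g : ℝ → ℝ} (hg : ContDiff ℝ 2 g) {m : ℕ} (hm : m ≠ 0)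
    {a : ℝ} (hode : ∀ t > 0, deriv (deriv g) t + m * deriv g t / t = a) {t : ℝ} (ht : 0 ≤ t) :
    g t = g 0 + a / (2 * (m + 1)) * t ^ 2 := by
  have hg' : ∀ s > 0, deriv g s = a / (m + 1) * s :=
    fun s hs => eq_mul_of_hasDerivAt_radial (hg.continuous_deriv one_le_two) hm
      (fun s hs => (hg.differentiable_deriv_two s).hasDerivAt.congr_deriv
        (by linarith [hode s hs])) hs
  have hF : ∀ s > 0, HasDerivAt (fun s => g s - a / (2 * (m + 1)) * s ^ 2) 0 s := by
    intro s hs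
    refine ((hg.differentiable two_ne_zero s).hasDerivAt.sub
      ((hasDerivAt_pow 2 s).const_mul _)).congr_deriv ?_
    rw [hg' s hs]
    field_simp
    ring
  have h := eq_of_hasDerivAt_eq_zero_of_pos (hg.continuous.sub (by fun_prop)).continuousOn hF ht
  norm_num at h
  linarith

theorem lap_comp_norm_eq_of_norm_eq {g : ℝ → ℝ} (hg : ContDiff ℝ 2 g)
    {x y : EuclideanSpace ℝ (Fin 4)} (hxy : ‖x‖ = ‖y‖) :
    lap (fun z => g ‖z‖) x = lap (fun z => g ‖z‖) y := by
  rcases eq_or_ne x 0 with rfl | hx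
  · rw [eq_comm, norm_zero, norm_eq_zero] at hxy
    rw [hxy]
  · have hy : y ≠ 0 := norm_ne_zero_iff.1 (hxy ▸ norm_ne_zero_iff.2 hx)
    rw [lap_comp_norm hg hx, lap_comp_norm hg hy, hxy]

theorem eq_sub_mul_sq_of_lap_comp_norm {g : ℝ → ℝ} (hg : ContDiff ℝ 2 g) {a : ℝ}
    (hlap : ∀ x ≠ 0, lap (fun z => g ‖z‖) x = a) {t : ℝ} (ht : 0 ≤ t) :
    g t = g 0 - a / 8 * t ^ 2 := by
  have hode : ∀ t > 0, deriv (deriv g) t + (3 : ℕ) * deriv g t / t = -a := by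
    intro t ht
    obtain ⟨x, rfl⟩ := exists_norm_eq (EuclideanSpace ℝ (Fin 4)) ht.le
    have h := lap_comp_norm hg (norm_pos_iff.1 ht)
    rw [hlap x (norm_pos_iff.1 ht)] at h
    push_cast
    linarith
  rw [eq_add_mul_sq_of_radial_ode hg three_ne_zero hode ht]
  push_cast
  ring

theorem stmt7 (φ : EuclideanSpace ℝ (Fin 4) → ℝ)
    (hφ : ContDiff ℝ 4 φ)
    (hrad : ∀ x y : EuclideanSpace ℝ (Fin 4), ‖x‖ = ‖y‖ → φ x = φ y)
    (hbih : ∀ x, biLap φ x = 0)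
    (hmax : ∀ x, φ x ≤ φ 0) (h0 : φ 0 = 0)
    (hnz : ∃ x, φ x ≠ 0) :
    ∃ α : ℝ, 0 < α ∧ ∀ x, φ x = -α * ‖x‖ ^ 2 := by
  obtain ⟨g, hg, hφg⟩ := exists_contDiff_eq_comp_norm hφ hrad
  have hg2 : ContDiff ℝ 2 g := hg.of_le (by norm_num)
  obtain ⟨k, hk, hlapφ⟩ := exists_contDiff_eq_comp_norm (contDiff_lap (n := 2) hφ (by norm_num))
    fun x y hxy => hφg ▸ lap_comp_norm_eq_of_norm_eq hg2 hxy
  have hlap_const : ∀ x, lap φ x = k 0 := by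
    intro x
    have h := eq_sub_mul_sq_of_lap_comp_norm (a := 0) hk (fun y _ => hlapφ ▸ hbih y)
      (norm_nonneg x)
    rw [congrFun hlapφ x, h]
    ring
  have hφ_eq : ∀ x, φ x = -(k 0 / 8) * ‖x‖ ^ 2 := by
    intro x
    have h := eq_sub_mul_sq_of_lap_comp_norm hg2 (fun y _ => hφg ▸ hlap_const y) (norm_nonneg x)
    have hg0 : g 0 = 0 := by simpa [hφg] using h0
    rw [congrFun hφg x, h, hg0]
    ring
  refine ⟨k 0 / 8, ?_, hφ_eq⟩
  obtain ⟨x, hx⟩ := hnz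
  have hle := hmax x
  rw [h0, hφ_eq, neg_mul] at hle
  rw [hφ_eq, neg_mul] at hx
  exact pos_of_mul_pos_left (lt_of_le_of_ne (neg_nonpos.1 hle) (Ne.symm (neg_ne_zero.1 hx)))
    (sq_nonneg _)
end
end

section
/- Let δ ∈ (0,1), Λ > 0, and let u: B_δ(0) → ℝ (ball in ℝ⁴) be measurable with ∫_{B_δ(0)} e^{4u} dx ≤ Λ and satisfying |x| e^{u(x)} ≤ C₀ for all x ∈ B_δ(0). Then there exists C' > 0 (depending only on δ, Λ, C₀) such that ∫_{B_δ(0)} e^{4u(y)}/|x-y| dy ≤ C'/|x| for all x ∈ B_δ(0)∖{0}. -/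
open MeasureTheory Metric Real Filter
open scoped RealInnerProductSpace

noncomputable section

/-!
Put `r = ‖x‖ / 2` and split `B_δ(0)` into its part inside `B_r(x)` and the rest. Away from `x`
the kernel `‖x - y‖⁻¹` is at most `2 / ‖x‖`, so that part contributes at most `2Λ / ‖x‖`. Inside
`B_r(x)` we have `‖y‖ > ‖x‖ / 2`, so the pointwise bound gives `e^{4u(y)} ≤ (2C₀ / ‖x‖)⁴`, while
scaling gives `∫_{B_r(x)} ‖x - y‖⁻¹ dy = r³ K` with `K = ∫_{B_1(0)} ‖z‖⁻¹ dz`, finite in `ℝ⁴`;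
the product is `2C₀⁴K / ‖x‖`.
-/

open Module Set

section Translation

theorem preimage_sub_right_ball {E : Type*} [SeminormedAddCommGroup E] (x : E) (r : ℝ) :
    (· - x) ⁻¹' ball (0 : E) r = ball x r := by
  ext y; simp [dist_eq_norm]

variable {E F : Type*} [NormedAddCommGroup E] [MeasurableSpace E] [BorelSpace E]
  [NormedAddCommGroup F] {μ : Measure E} [μ.IsAddRightInvariant]

theorem integrableOn_ball_comp_sub_iff {f : E → F} {x : E} {r : ℝ} :
    IntegrableOn (fun y ↦ f (y - x)) (ball x r) μ ↔ IntegrableOn f (ball 0 r) μ := by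
  rw [← preimage_sub_right_ball]
  exact (measurePreserving_sub_right μ x).integrableOn_comp_preimage
    (measurableEmbedding_subRight x)

theorem setIntegral_ball_comp_sub [NormedSpace ℝ F] (f : E → F) (x : E) (r : ℝ) :
    ∫ y in ball x r, f (y - x) ∂μ = ∫ z in ball 0 r, f z ∂μ := by
  rw [← preimage_sub_right_ball]
  exact (measurePreserving_sub_right μ x).setIntegral_preimage_emb
    (measurableEmbedding_subRight x) f _

end Translation

section SingularKernel

variable {E : Type*} [NormedAddCommGroup E] [MeasurableSpace E]
  {μ : Measure E} {f : E → ℝ} {s : Set E} {x : E} {r : ℝ}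

theorem IntegrableOn.of_div_norm_sub [NullSingletonClass μ] {R : ℝ}
    (hg : IntegrableOn (fun y ↦ f y / ‖x - y‖) s μ) (hf : AEStronglyMeasurable f μ)
    (hs : MeasurableSet s) (hsR : s ⊆ closedBall x R) : IntegrableOn f s μ := by
  have hne : ∀ᵐ y ∂μ, y ≠ x := compl_mem_ae_iff.2 (measure_singleton x)
  refine Integrable.mono' (hg.norm.const_mul R) hf.restrict ?_
  filter_upwards [ae_restrict_mem hs, ae_restrict_of_ae hne] with y hys hyx
  have hxy : 0 < ‖x - y‖ := norm_pos_iff.2 (sub_ne_zero.2 hyx.symm)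
  have hR : ‖x - y‖ ≤ R := by simpa [dist_eq_norm'] using hsR hys
  calc ‖f y‖ = ‖f y / ‖x - y‖‖ * ‖x - y‖ := by
        rw [norm_div, norm_norm, div_mul_cancel₀ _ hxy.ne']
    _ ≤ R * ‖f y / ‖x - y‖‖ := by rw [mul_comm]; gcongr

theorem setIntegral_sdiff_ball_div_norm_sub_le [OpensMeasurableSpace E] (hf0 : 0 ≤ f)
    (hf : IntegrableOn f s μ) (hs : MeasurableSet s) (hr : 0 < r) :
    ∫ y in s \ ball x r, f y / ‖x - y‖ ∂μ ≤ (∫ y in s, f y ∂μ) / r := by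
  calc ∫ y in s \ ball x r, f y / ‖x - y‖ ∂μ
      ≤ ∫ y in s \ ball x r, f y / r ∂μ := by
        refine integral_mono_of_nonneg (ae_of_all _ fun y ↦ div_nonneg (hf0 y) (norm_nonneg _))
          ((hf.mono_set sdiff_subset).div_const r) ?_
        refine ae_restrict_of_forall_mem (hs.diff measurableSet_ball) fun y hy ↦ ?_
        have hry : r ≤ ‖x - y‖ := by simpa [dist_eq_norm'] using hy.2
        exact div_le_div_of_nonneg_left (hf0 y) hr hry
    _ ≤ ∫ y in s, f y / r ∂μ :=
        setIntegral_mono_set (hf.div_const r) (ae_of_all _ fun y ↦ div_nonneg (hf0 y) hr.le)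
          sdiff_subset.eventuallyLE
    _ = (∫ y in s, f y ∂μ) / r := integral_div r _

variable [NormedSpace ℝ E] [FiniteDimensional ℝ E] [BorelSpace E] [μ.IsAddHaarMeasure]

theorem integrableOn_ball_norm_sub_inv (hd : 1 < finrank ℝ E) (x : E) (r : ℝ) :
    IntegrableOn (fun y ↦ ‖y - x‖⁻¹) (ball x r) μ := by
  refine integrableOn_ball_comp_sub_iff.2 <| integrableOn_ball_of_norm_le_rpow (C := 1) (α := 1)
    hd.le (by exact_mod_cast hd) (ae_of_all _ fun z ↦ ?_) measurable_norm.inv.aestronglyMeasurable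
  simp [Real.rpow_neg_one]

theorem setIntegral_ball_norm_inv (hr : 0 < r) :
    ∫ z in ball (0 : E) r, ‖z‖⁻¹ ∂μ = r ^ finrank ℝ E / r * ∫ z in ball (0 : E) 1, ‖z‖⁻¹ ∂μ := by
  have h := Measure.setIntegral_comp_smul_of_pos μ (fun z : E ↦ ‖z‖⁻¹) (ball 0 1) hr
  simp only [norm_smul, Real.norm_of_nonneg hr.le, mul_inv, smul_unitBall_of_pos hr, smul_eq_mul,
    integral_const_mul] at h
  field_simp at h ⊢
  linarith

theorem setIntegral_inter_ball_div_norm_sub_le (hd : 1 < finrank ℝ E) (hf0 : 0 ≤ f) {M : ℝ}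
    (hM : 0 ≤ M) (hfM : ∀ y ∈ s ∩ ball x r, f y ≤ M) (hs : MeasurableSet s) (hr : 0 < r) :
    ∫ y in s ∩ ball x r, f y / ‖x - y‖ ∂μ
      ≤ M * (r ^ finrank ℝ E / r * ∫ z in ball (0 : E) 1, ‖z‖⁻¹ ∂μ) := by
  have hk : IntegrableOn (fun y ↦ M * ‖y - x‖⁻¹) (ball x r) μ :=
    (integrableOn_ball_norm_sub_inv hd x r).const_mul M
  calc ∫ y in s ∩ ball x r, f y / ‖x - y‖ ∂μ
      ≤ ∫ y in s ∩ ball x r, M * ‖y - x‖⁻¹ ∂μ := by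
        refine integral_mono_of_nonneg (ae_of_all _ fun y ↦ div_nonneg (hf0 y) (norm_nonneg _))
          (hk.mono_set inter_subset_right) ?_
        refine ae_restrict_of_forall_mem (hs.inter measurableSet_ball) fun y hy ↦ ?_
        dsimp only
        rw [div_eq_mul_inv, norm_sub_rev]
        exact mul_le_mul_of_nonneg_right (hfM y hy) (inv_nonneg.2 (norm_nonneg _))
    _ ≤ ∫ y in ball x r, M * ‖y - x‖⁻¹ ∂μ :=
        setIntegral_mono_set hk (ae_of_all _ fun y ↦ by positivity) inter_subset_right.eventuallyLE
    _ = M * (r ^ finrank ℝ E / r * ∫ z in ball (0 : E) 1, ‖z‖⁻¹ ∂μ) := by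
        rw [integral_const_mul, setIntegral_ball_comp_sub (fun z ↦ ‖z‖⁻¹) x r,
          setIntegral_ball_norm_inv hr]

end SingularKernel

theorem lt_norm_of_mem_ball_half {E : Type*} [SeminormedAddCommGroup E] {x y : E}
    (hy : y ∈ ball x (‖x‖ / 2)) : ‖x‖ / 2 < ‖y‖ := by
  rw [mem_ball, dist_eq_norm'] at hy
  linarith [norm_sub_norm_le x y]

theorem le_two_mul_div_norm_of_mem_ball_half {E : Type*} [SeminormedAddCommGroup E] {x y : E}
    {t C : ℝ} (hC : 0 ≤ C) (hy : y ∈ ball x (‖x‖ / 2)) (ht : ‖y‖ * t ≤ C) :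
    t ≤ 2 * C / ‖x‖ := by
  have hxy := lt_norm_of_mem_ball_half hy
  have hx : 0 < ‖x‖ / 2 := pos_of_mem_ball hy
  have hy0 : 0 < ‖y‖ := hx.trans hxy
  calc t ≤ C / ‖y‖ := by rw [le_div_iff₀ hy0, mul_comm]; exact ht
    _ ≤ C / (‖x‖ / 2) := by gcongr
    _ = 2 * C / ‖x‖ := by ring

theorem stmt14_general (δ Λ C₀ : ℝ) (hΛ : 0 < Λ) (hC₀ : 0 < C₀)
    (u : EuclideanSpace ℝ (Fin 4) → ℝ) (hmeas : Measurable u)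
    (hnrj : ∫ x in ball (0 : EuclideanSpace ℝ (Fin 4)) δ, Real.exp (4 * u x) ≤ Λ)
    (hptw : ∀ x ∈ ball (0 : EuclideanSpace ℝ (Fin 4)) δ, ‖x‖ * Real.exp (u x) ≤ C₀) :
    ∃ C' : ℝ, 0 < C' ∧ ∀ x ∈ ball (0 : EuclideanSpace ℝ (Fin 4)) δ, x ≠ 0 →
      ∫ y in ball (0 : EuclideanSpace ℝ (Fin 4)) δ, Real.exp (4 * u y) / ‖x - y‖
        ≤ C' / ‖x‖ := by
  set K := ∫ z in ball (0 : EuclideanSpace ℝ (Fin 4)) 1, ‖z‖⁻¹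
  have hK : 0 ≤ K := setIntegral_nonneg measurableSet_ball fun z _ ↦ inv_nonneg.2 (norm_nonneg z)
  have hC' : 0 < 2 * Λ + 2 * C₀ ^ 4 * K := by positivity
  refine ⟨_, hC', fun x _ hx0 ↦ ?_⟩
  have hx : 0 < ‖x‖ := norm_pos_iff.2 hx0
  have hf0 : 0 ≤ fun y ↦ exp (4 * u y) := fun y ↦ (exp_pos _).le
  -- `hnrj` only carries information once `e^{4u}` is integrable on the ball, which
  -- integrability of the singular integrand provides.
  by_cases hg : IntegrableOn (fun y ↦ exp (4 * u y) / ‖x - y‖) (ball 0 δ)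
  swap
  · rw [integral_undef hg]
    exact div_nonneg hC'.le hx.le
  have hf : IntegrableOn (fun y ↦ exp (4 * u y)) (ball 0 δ) :=
    IntegrableOn.of_div_norm_sub hg (by fun_prop) measurableSet_ball
      (ball_subset_closedBall.trans (closedBall_subset_closedBall' le_rfl))
  have hbound : ∀ y ∈ ball 0 δ ∩ ball x (‖x‖ / 2), exp (4 * u y) ≤ (2 * C₀ / ‖x‖) ^ 4 := by
    rintro y ⟨hy, hyx⟩
    rw [show 4 * u y = (4 : ℕ) * u y by norm_num, exp_nat_mul]
    gcongr
    exact le_two_mul_div_norm_of_mem_ball_half hC₀.le hyx (hptw y hy)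
  have hnear := setIntegral_inter_ball_div_norm_sub_le (μ := volume) (by simp) hf0
    (by positivity) hbound measurableSet_ball (half_pos hx)
  have hfar := setIntegral_sdiff_ball_div_norm_sub_le hf0 hf measurableSet_ball (x := x)
    (half_pos hx)
  rw [finrank_euclideanSpace_fin] at hnear
  rw [← integral_inter_add_sdiff measurableSet_ball hg]
  calc _ ≤ (2 * C₀ / ‖x‖) ^ 4 * ((‖x‖ / 2) ^ 4 / (‖x‖ / 2) * K) + Λ / (‖x‖ / 2) :=
        add_le_add hnear (hfar.trans (by gcongr))
    _ = (2 * Λ + 2 * C₀ ^ 4 * K) / ‖x‖ := by field_simp; ring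

theorem stmt14 (δ Λ C₀ : ℝ) (hδ : 0 < δ) (hδ' : δ < 1) (hΛ : 0 < Λ) (hC₀ : 0 < C₀)
    (u : EuclideanSpace ℝ (Fin 4) → ℝ) (hmeas : Measurable u)
    (hnrj : ∫ x in ball (0 : EuclideanSpace ℝ (Fin 4)) δ, Real.exp (4 * u x) ≤ Λ)
    (hptw : ∀ x ∈ ball (0 : EuclideanSpace ℝ (Fin 4)) δ, ‖x‖ * Real.exp (u x) ≤ C₀) :
    ∃ C' : ℝ, 0 < C' ∧ ∀ x ∈ ball (0 : EuclideanSpace ℝ (Fin 4)) δ, x ≠ 0 →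
      ∫ y in ball (0 : EuclideanSpace ℝ (Fin 4)) δ, Real.exp (4 * u y) / ‖x - y‖
        ≤ C' / ‖x‖ :=
  stmt14_general δ Λ C₀ hΛ hC₀ u hmeas hnrj hptw
end
end
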